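/- Let k ≥ 3, 0 < α < 1/2, ε > 0. For Δ sufficiently large (depending on ε, α) and n large, with probability 1 − o(1) over a random β-balanced formula with m = Δn clauses: for every set S of n literals containing exactly a γ fraction of positive literals, fewer than ((1−α)^k + ε)m clauses avoid S. (Union bound over at most 2^{2γn} choices of S, using a Chernoff bound per S with failure probability at most (1−α)^{3n}.) -/

import Mathlib

/-! For a fixed `S` the number of avoiding clauses is a sum of `m` independent indicators of
mean `p = (1-α)^k`, so by Hoeffding's inequality it reaches `(p + ε) m` with probability at
most `exp (-2ε²m) = exp (-2ε²Δn)`. A union bound over the at most `2^(2γn)` sets `S` leaves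
`exp ((2γ log 2 - 2ε²Δ) n)`, which is at most `exp (-n)` once `Δ` is large. -/

open MeasureTheory ProbabilityTheory Real

theorem measureReal_card_filter_ge_le {Ω ι : Type*} [MeasurableSpace Ω] {μ : Measure Ω}
    [IsProbabilityMeasure μ] [Fintype ι] {B : ι → Ω → Bool} (hB : ∀ i, Measurable (B i))
    (hindep : iIndepFun B μ) {p ε : ℝ} (hε : 0 ≤ ε)
    (hp : ∀ i, μ.real {ω | B i ω = true} = p) :
    μ.real {ω | (p + ε) * Fintype.card ι ≤ (Finset.univ.filter (fun i => B i ω = true)).card}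
      ≤ exp (-2 * ε ^ 2 * Fintype.card ι) := by
  classical
  set X : ι → Ω → ℝ := fun i => {ω | B i ω = true}.indicator 1 with hX
  have hmean : ∀ i, μ[X i] = p := fun i => by
    rw [← hp i]
    exact integral_indicator_one (hB i (measurableSet_singleton true))
  have hsubG : ∀ i ∈ Finset.univ,
      HasSubgaussianMGF (fun ω => X i ω - p) ((‖(1:ℝ) - 0‖₊ / 2) ^ 2) μ := by
    intro i _
    rw [← hmean i]
    refine hasSubgaussianMGF_of_mem_Icc ((measurable_one.indicator
      (hB i (measurableSet_singleton true))).aemeasurable) (ae_of_all _ fun ω => ?_)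
    by_cases h : B i ω = true <;> simp [hX, h]
  have hcentred : iIndepFun (fun i ω => X i ω - p) μ := by
    convert hindep.comp (fun _ b => (if b = true then (1:ℝ) else 0) - p)
      (fun _ => Measurable.of_discrete) using 2 with i
    ext ω; by_cases h : B i ω = true <;> simp [hX, h]
  have hoeffding := HasSubgaussianMGF.measure_sum_ge_le_of_iIndepFun hcentred hsubG
    (mul_nonneg hε (Nat.cast_nonneg (Fintype.card ι)))
  have hsum : ∀ ω, ∑ i, (X i ω - p) =
      (Finset.univ.filter (fun i => B i ω = true)).card - p * Fintype.card ι := by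
    intro ω
    simp [Finset.sum_sub_distrib, hX, Set.indicator_apply, mul_comm]
  convert hoeffding using 2
  · ext ω; simp only [Set.mem_ofPred_eq, hsum]; constructor <;> intro h <;> linarith
  · obtain hn | hn := eq_or_ne (Fintype.card ι) 0
    · simp [hn]
    · simp only [sub_zero, nnnorm_one, Finset.sum_const, Finset.card_univ, nsmul_eq_mul]
      push_cast
      field_simp

theorem two_rpow_mul_exp_le_exp_neg {γ c Δ : ℝ} (hΔ : 2 * γ * log 2 + 1 ≤ c * Δ) (n : ℕ) :
    (2 : ℝ) ^ (2 * γ * n) * exp (-c * (Δ * n)) ≤ exp (-n) := by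
  rw [rpow_def_of_pos two_pos, ← exp_add, exp_le_exp]
  nlinarith [Nat.cast_nonneg (α := ℝ) n]

theorem stmt15_general (k : ℕ) (α γ ε : ℝ)
    (hα : α < 1/2) (hε : 0 < ε) :
    ∃ Δ₀ : ℝ, 0 < Δ₀ ∧ ∀ Δ : ℝ, Δ₀ ≤ Δ →
      ∀ θ : ℝ, 0 < θ → ∃ N : ℕ, ∀ n : ℕ, N ≤ n → ∀ m : ℕ, (m : ℝ) = Δ * n →
        ∀ (Ω : Type) [MeasurableSpace Ω] (μ : Measure Ω) [IsProbabilityMeasure μ],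
          ∀ (𝒮 : Type) [Fintype 𝒮],
            ((Fintype.card 𝒮 : ℝ) ≤ (2 : ℝ) ^ (2 * γ * (n : ℝ))) →
            ∀ Avoid : 𝒮 → Fin m → Ω → Bool,
              (∀ S j, Measurable (Avoid S j)) →
              (∀ S, iIndepFun (Avoid S) μ) →
              (∀ S j, μ {ω | Avoid S j ω = true} = ENNReal.ofReal ((1 - α) ^ k)) →
              μ {ω | ∃ S, ((1 - α) ^ k + ε) * m ≤
                  ((Finset.univ.filter (fun j : Fin m => Avoid S j ω = true)).card : ℝ)}
                ≤ ENNReal.ofReal θ := by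
  have hp : 0 ≤ (1 - α) ^ k := pow_nonneg (by linarith) k
  refine ⟨max 1 ((2 * γ * log 2 + 1) / (2 * ε ^ 2)), lt_max_of_lt_left one_pos,
    fun Δ hΔ θ hθ => ⟨⌈-log θ⌉₊, fun n hn m hm Ω _ μ _ 𝒮 _ hcard Avoid hmeas hindep hμ => ?_⟩⟩
  have hΔ' : 2 * γ * log 2 + 1 ≤ 2 * ε ^ 2 * Δ :=
    (div_le_iff₀' (by positivity)).mp ((le_max_right _ _).trans hΔ)
  have hθn : exp (-n) ≤ θ := by
    rw [← exp_log hθ, exp_le_exp, neg_le]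
    exact (Nat.le_ceil _).trans (Nat.cast_le.mpr hn)
  rw [ENNReal.le_ofReal_iff_toReal_le (measure_ne_top _ _) hθ.le, ← measureReal_def,
    Set.ofPred_exists]
  calc _ ≤ ∑ S, μ.real {ω | ((1 - α) ^ k + ε) * m ≤
          ((Finset.univ.filter (fun j : Fin m => Avoid S j ω = true)).card : ℝ)} :=
        measureReal_iUnion_fintype_le _
    _ ≤ ∑ _S : 𝒮, exp (-2 * ε ^ 2 * m) := by
        gcongr with S
        simpa using measureReal_card_filter_ge_le (hmeas S) (hindep S) hε.le
          fun j => by rw [measureReal_def, hμ, ENNReal.toReal_ofReal hp]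
    _ ≤ (2 : ℝ) ^ (2 * γ * n) * exp (-(2 * ε ^ 2) * (Δ * n)) := by
        rw [Finset.sum_const, Finset.card_univ, nsmul_eq_mul, hm, neg_mul]
        gcongr
    _ ≤ θ := (two_rpow_mul_exp_le_exp_neg hΔ' n).trans hθn

/-- Lemma 1 of the paper (abstract form). Fix `k ≥ 3`, `0 < α < 1/2`, `ε > 0`. For
`Δ` sufficiently large and `n` large, with probability `1 - o(1)`: simultaneously
for every set `S` of `n` literals with exactly a `γ` fraction of positive literals
(there are at most `2^(2γn)` such sets, indexed by `𝒮`), fewer than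
`((1-α)^k + ε)·m` of the `m = Δn` clauses avoid `S`; here for each `S` the events
"clause `j` avoids `S`" are independent across clauses, each of probability
`(1-α)^k`. -/
theorem stmt15 (k : ℕ) (hk : 3 ≤ k) (α γ ε : ℝ)
    (hα0 : 0 < α) (hα : α < 1/2) (hγ : 0 < γ) (hε : 0 < ε) :
    ∃ Δ₀ : ℝ, 0 < Δ₀ ∧ ∀ Δ : ℝ, Δ₀ ≤ Δ →
      ∀ θ : ℝ, 0 < θ → ∃ N : ℕ, ∀ n : ℕ, N ≤ n → ∀ m : ℕ, (m : ℝ) = Δ * n →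
        ∀ (Ω : Type) [MeasurableSpace Ω] (μ : Measure Ω) [IsProbabilityMeasure μ],
          ∀ (𝒮 : Type) [Fintype 𝒮],
            ((Fintype.card 𝒮 : ℝ) ≤ (2 : ℝ) ^ (2 * γ * (n : ℝ))) →
            ∀ Avoid : 𝒮 → Fin m → Ω → Bool,
              (∀ S j, Measurable (Avoid S j)) →
              (∀ S, iIndepFun (Avoid S) μ) →
              (∀ S j, μ {ω | Avoid S j ω = true} = ENNReal.ofReal ((1 - α) ^ k)) →
              μ {ω | ∃ S, ((1 - α) ^ k + ε) * m ≤
                  ((Finset.univ.filter (fun j : Fin m => Avoid S j ω = true)).card : ℝ)}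
                ≤ ENNReal.ofReal θ :=
  stmt15_general k α γ ε hα hε
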